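/- Let m ≥ 2 and h₁,…,h_m be distinct positive reals, and let p_{ij} = h_j/(h_i + h_j). Let M be the true model (M_{ij} = 1 iff h_i < h_j) and M̂ any model with M̂_{ij} + M̂_{ji} = 1 for i ≠ j. Then Σ_{i≠j} M̂_{ij} p_{ij} ≤ Σ_{i≠j} M_{ij} p_{ij}, i.e., E[CI^U(M̂)] ≤ E[CI^U(M)]. -/
import Mathlib


open Finset

lemma swap_sum {m : ℕ} (A : Fin m → Fin m → ℝ) :
    ∑ i, ∑ j ∈ univ \ {i}, A i j = ∑ i, ∑ j ∈ univ \ {i}, A j i := by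
  rw [Finset.sum_comm' (s' := fun j => univ \ {j}) (t' := univ)
    (fun i j => by simp [ne_comm])]

/-- The true ranking maximizes the expected uncensored C-Index:
Σ_{i≠j} M̂_{ij} p_{ij} ≤ Σ_{i≠j} M_{ij} p_{ij} with p_{ij} = h_j/(h_i + h_j). -/
theorem stmt_10 (m : ℕ) (hm : 2 ≤ m) (h : Fin m → ℝ)
    (hpos : ∀ i, 0 < h i) (hinj : Function.Injective h)
    (Mhat : Fin m → Fin m → ℝ)
    (hbin : ∀ i j, Mhat i j = 0 ∨ Mhat i j = 1)
    (hcomp : ∀ i j, i ≠ j → Mhat i j + Mhat j i = 1) :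
    ∑ i, ∑ j ∈ univ \ {i}, Mhat i j * (h j / (h i + h j)) ≤
      ∑ i, ∑ j ∈ univ \ {i}, (if h i < h j then (1:ℝ) else 0) * (h j / (h i + h j)) := by
  set A : Fin m → Fin m → ℝ := fun i j => Mhat i j * (h j / (h i + h j)) with hA
  set B : Fin m → Fin m → ℝ :=
    fun i j => (if h i < h j then (1:ℝ) else 0) * (h j / (h i + h j)) with hB
  have key : ∀ i j : Fin m, i ≠ j → A i j + A j i ≤ B i j + B j i := by
    intro i j hij
    have hne : h i ≠ h j := fun e => hij (hinj e)
    have hden : 0 < h i + h j := by have := hpos i; have := hpos j; linarith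
    have hcomm : h j + h i = h i + h j := by ring
    simp only [hA, hB, hcomm]
    have hc := hcomp i j hij
    rcases hbin i j with h0 | h1
    · have hj1 : Mhat j i = 1 := by linarith
      rw [h0, hj1]
      rcases lt_or_gt_of_ne hne with hlt | hgt
      · simp [hlt, not_lt.mpr hlt.le]
        rw [div_le_div_iff₀ hden hden]
        nlinarith
      · simp [hgt, not_lt.mpr hgt.le]
    · have hj0 : Mhat j i = 0 := by linarith
      rw [h1, hj0]
      rcases lt_or_gt_of_ne hne with hlt | hgt
      · simp [hlt, not_lt.mpr hlt.le]
      · simp [hgt, not_lt.mpr hgt.le]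
        rw [div_le_div_iff₀ hden hden]
        nlinarith
  have hdouble : ∀ C : Fin m → Fin m → ℝ,
      (2:ℝ) * ∑ i, ∑ j ∈ univ \ {i}, C i j
        = ∑ i, ∑ j ∈ univ \ {i}, (C i j + C j i) := by
    intro C
    rw [two_mul]
    nth_rewrite 2 [swap_sum C]
    rw [← Finset.sum_add_distrib]
    congr 1; funext i
    rw [← Finset.sum_add_distrib]
  have main : (2:ℝ) * ∑ i, ∑ j ∈ univ \ {i}, A i j
      ≤ (2:ℝ) * ∑ i, ∑ j ∈ univ \ {i}, B i j := by
    rw [hdouble A, hdouble B]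
    apply Finset.sum_le_sum
    intro i _
    apply Finset.sum_le_sum
    intro j hj
    simp only [Finset.mem_sdiff, Finset.mem_singleton] at hj
    exact key i j (Ne.symm hj.2)
  linarith
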